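/- (Claim 3.1.) There is an absolute constant C > 0 such that for all parameters n, v, u satisfying the model hypotheses and every deterministic incremental retrieval scheme (F, G, Query), the random variables of the process satisfy H(G) + H((B, R_B) | (F, G)) ≥ H(B) + n·v − C·n. -/

import Mathlib

noncomputable section

namespace Retrieval

/-! ### Entropy on a finite sample space with the uniform distribution -/

/-- The probability of an event `s` under the uniform distribution on a finite type `Ω`. -/
def unifPr (Ω : Type*) [Fintype Ω] (s : Set Ω) : ℝ :=
  (Nat.card s : ℝ) / (Fintype.card Ω : ℝ)

/-- The Shannon entropy (in bits) of a random variable `X` defined on a finite sample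
space `Ω` carrying the uniform distribution. -/
def entropy {Ω : Type*} {α : Type*} [Fintype Ω] (X : Ω → α) : ℝ :=
  (∑ ω : Ω, -Real.logb 2 (unifPr Ω {ω' | X ω' = X ω})) / (Fintype.card Ω : ℝ)

/-- The conditional Shannon entropy `H(X | Y) = H(X, Y) − H(Y)` (in bits). -/
def condEntropy {Ω : Type*} {α β : Type*} [Fintype Ω] (X : Ω → α) (Y : Ω → β) : ℝ :=
  entropy (fun ω => (X ω, Y ω)) - entropy Y

/-- The first bit of a `v`-bit string. -/
def firstBit {v : ℕ} (r : Fin v → Bool) : Bool :=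
  if h : 0 < v then r ⟨0, h⟩ else false

/-! ### The incremental random process

Parameters `n v u`.  The universe `[u]` is split into `m = n − n/v` consecutive parts,
each of size `u/m`.  An element of the `i`-th part is identified by its position
`a ∈ Fin (u/m)` inside the part; as a natural number it is the key `i·(u/m) + a`. -/

variable (n v u : ℕ)

/-- `m = n − n/v`, the number of parts of the universe. -/
def M : ℕ := n - n / v

/-- `u/m`, the size of each part of the universe. -/
def W : ℕ := u / M n v

/-- The key (element of `[u]`, 0-indexed) at position `a` of part `i`. -/
def key (i : Fin (M n v)) (a : Fin (W n v u)) : ℕ := (i : ℕ) * W n v u + (a : ℕ)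

/-- The model hypotheses on the parameters: `2 ≤ v ≤ log₂ n`, `v ∣ n`,
`m = n − n/v` divides `u`, and `u ≥ n³`. -/
def Hyp : Prop :=
  2 ≤ v ∧ (v : ℝ) ≤ Real.logb 2 n ∧ v ∣ n ∧ M n v ∣ u ∧ n ^ 3 ≤ u

/-- Raw data of a realization of the incremental random process:
`((A, R_A), (P_B, B, R_B))`.  `A i` is the (position of the) element of `A` in part `i`
and `R_A i` its `v`-bit value; `P_B` is the set of parts from which `B` samples, `B i` the
element of `B` in part `i` (for `i ∈ P_B`; it is a canonical junk value `0` otherwise) and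
`R_B i` its value (a canonical junk value otherwise). -/
abbrev IncData : Type :=
  ((Fin (M n v) → Fin (W n v u)) × (Fin (M n v) → Fin v → Bool)) ×
    (Finset (Fin (M n v)) × (Fin (M n v) → Fin (W n v u)) × (Fin (M n v) → Fin v → Bool))

/-- Validity of a realization of `(A, R_A)`: every value has first bit `0`
(the set `A` itself is unconstrained). -/
def ValidAR (_A : Fin (M n v) → Fin (W n v u)) (RA : Fin (M n v) → Fin v → Bool) : Prop :=
  ∀ j, firstBit (RA j) = false

/-- Validity of a realization `(P_B, B)` given `A`: `|P_B| = n/v`, for `i ∈ P_B` the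
element `B i` avoids `A i`, and outside `P_B` the function `B` takes a canonical junk
value (so that `(P_B, B)` carries exactly the information of the indexed family
`(b_i)_{i ∈ P_B}`). -/
def ValidB (A : Fin (M n v) → Fin (W n v u)) (P : Finset (Fin (M n v)))
    (B : Fin (M n v) → Fin (W n v u)) : Prop :=
  P.card = n / v ∧ (∀ j ∈ P, B j ≠ A j) ∧ ∀ j ∉ P, (B j : ℕ) = 0

/-- Validity of a realization of `R_B` given `P_B`: for `i ∈ P_B` the value has first
bit `1`; outside `P_B` it is a canonical junk value. -/
def ValidRB (P : Finset (Fin (M n v))) (RB : Fin (M n v) → Fin v → Bool) : Prop :=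
  (∀ j ∈ P, firstBit (RB j) = true) ∧ ∀ j ∉ P, RB j = fun _ => false

/-- Validity of a full realization of the incremental process. -/
def IncValid (d : IncData n v u) : Prop :=
  ValidAR n v u d.1.1 d.1.2 ∧ ValidB n v u d.1.1 d.2.1 d.2.2.1 ∧ ValidRB n v d.2.1 d.2.2.2

/-- The sample space of the incremental random process: since every random choice in the
process is uniform (subject to the stated constraints, whose number of options does not
depend on the previous choices), the joint distribution of `(A, R_A, P_B, B, R_B)` is the
uniform distribution on the set of valid realizations. -/
abbrev IncOmega : Type := {d : IncData n v u // IncValid n v u d}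

noncomputable instance : Fintype (IncOmega n v u) := Fintype.ofFinite _

/-- The type of the (deterministic) map `F`, building a bit string from a realization of
`(A, R_A)`. -/
abbrev FBuilder : Type :=
  (Fin (M n v) → Fin (W n v u)) → (Fin (M n v) → Fin v → Bool) → List Bool

/-- The type of the (deterministic) map `G`, building a bit string from a bit string
together with a realization of `(B, R_B)` (given as `(P_B, B, R_B)`). -/
abbrev GBuilder : Type :=
  List Bool → Finset (Fin (M n v)) → (Fin (M n v) → Fin (W n v u)) →
    (Fin (M n v) → Fin v → Bool) → List Bool

/-- The type of the (deterministic) query map: a bit string and a key give a `v`-bit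
value. -/
abbrev QueryFn (v : ℕ) : Type := List Bool → ℕ → Fin v → Bool

/-- The random bit string `F = F(A, R_A)`. -/
def Frv (F : FBuilder n v u) (ω : IncOmega n v u) : List Bool := F ω.1.1.1 ω.1.1.2

/-- The random bit string `G = G(F(A, R_A), B, R_B)`. -/
def Grv (F : FBuilder n v u) (G : GBuilder n v u) (ω : IncOmega n v u) : List Bool :=
  G (Frv n v u F ω) ω.1.2.1 ω.1.2.2.1 ω.1.2.2.2

/-- The random variable `B` (together with the set of parts `P_B` it samples from). -/
def Brv (ω : IncOmega n v u) : Finset (Fin (M n v)) × (Fin (M n v) → Fin (W n v u)) :=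
  (ω.1.2.1, ω.1.2.2.1)

/-- The random variable `(B, R_B)`. -/
def BRrv (ω : IncOmega n v u) :
    Finset (Fin (M n v)) × (Fin (M n v) → Fin (W n v u)) × (Fin (M n v) → Fin v → Bool) :=
  ω.1.2

/-- Correctness of an incremental retrieval scheme `(F, G, Query)`: on every realization
in the support of the process, querying `F(A,R_A)` with a key of `A` returns its value,
and querying `G(F(A,R_A),B,R_B)` with a key of `A` or of `B` returns its value. -/
def Correct (F : FBuilder n v u) (G : GBuilder n v u) (Q : QueryFn v) : Prop :=
  ∀ ω : IncOmega n v u,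
    (∀ i, Q (Frv n v u F ω) (key n v u i (ω.1.1.1 i)) = ω.1.1.2 i) ∧
    (∀ i, Q (Grv n v u F G ω) (key n v u i (ω.1.1.1 i)) = ω.1.1.2 i) ∧
    (∀ i ∈ ω.1.2.1, Q (Grv n v u F G ω) (key n v u i (ω.1.2.2.1 i)) = ω.1.2.2.2 i)

/-- The plausible set `P_i(f)`: all pairs `(x, r)` of an element `x` of part `i` and a
`v`-bit value `r` with first bit `0` such that some realization `(A', R'_{A'})` in the
support of `(A, R_A)` has `F(A', R'_{A'}) = f`, `x` the element of `A'` in part `i`, and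
`r` its value. -/
def Plausible (F : FBuilder n v u) (f : List Bool) (i : Fin (M n v)) :
    Set (Fin (W n v u) × (Fin v → Bool)) :=
  {p | ∃ A' RA', ValidAR n v u A' RA' ∧ F A' RA' = f ∧ A' i = p.1 ∧ RA' i = p.2}

/-- A pair `(x, r) ∈ P_i(f)` *remains feasible after `B`* (given as `(P_B, B)`) if the
witness `(A', R'_{A'})` can additionally be chosen with `A' ∩ B = ∅`. -/
def Feasible (F : FBuilder n v u) (f : List Bool) (i : Fin (M n v))
    (P : Finset (Fin (M n v))) (B : Fin (M n v) → Fin (W n v u))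
    (p : Fin (W n v u) × (Fin v → Bool)) : Prop :=
  ∃ A' RA', ValidAR n v u A' RA' ∧ F A' RA' = f ∧ A' i = p.1 ∧ RA' i = p.2 ∧
    ∀ j ∈ P, B j ≠ A' j

end Retrieval

/-!
Conditioning on the finer `((A, R_A), G)` instead of `(F, G)` can only lower the entropy of
`(B, R_B)`, and `((A, R_A), G, (B, R_B))` determines the whole sample, so
`H(G) + H((B, R_B) | F, G) ≥ H(G) + log |Ω| - H((A, R_A), G)`. By correctness `R_A` is read off
`G` by querying the keys of `A`, hence `H((A, R_A), G) = H(A, G) ≤ H(A) + H(G)` and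
`H(A) ≤ m log (u/m)`. On the other side each fibre of `B` contains every realization whose `A`
avoids `B`, with arbitrary values: at least `(u/m - 1)^m 2^((v-1) n)` of them. Comparing the two
bounds loses `m (log (u/m) - log (u/m - 1)) + n ≤ 2n`, so `C = 2` works.

Entropies on the uniform sample space are sums over fibre sizes; the inequalities between them
all come from Gibbs' inequality in the form `log t ≤ t - 1`.
-/
namespace Retrieval

open Finset Real

section UniformEntropy

open scoped Classical

variable {Ω ι α β γ : Type*} [Fintype Ω]

def fiber (X : Ω → α) (ω : Ω) : Finset Ω := {ω' | X ω' = X ω}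

@[simp] lemma mem_fiber {X : Ω → α} {ω ω' : Ω} : ω' ∈ fiber X ω ↔ X ω' = X ω := by
  simp [fiber]

lemma card_fiber_pos (X : Ω → α) (ω : Ω) : 0 < #(fiber X ω) :=
  card_pos.2 ⟨ω, mem_fiber.2 rfl⟩

lemma card_fiber_eq_natCard (X : Ω → α) (ω : Ω) :
    #(fiber X ω) = Nat.card {ω' // X ω' = X ω} := by
  rw [Nat.card_eq_fintype_card, Fintype.card_subtype, fiber]

lemma fiber_pair (X : Ω → α) (Y : Ω → β) (ω : Ω) :
    fiber (fun ω => (X ω, Y ω)) ω = fiber X ω ∩ fiber Y ω := by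
  ext; simp [Prod.ext_iff]

lemma card_fiber_inter_pos (X : Ω → α) (Y : Ω → β) (ω : Ω) : 0 < #(fiber X ω ∩ fiber Y ω) :=
  fiber_pair X Y ω ▸ card_fiber_pos _ ω

lemma fiber_eq_of_mem {X : Ω → α} {ω ω' : Ω} (h : ω' ∈ fiber X ω) : fiber X ω' = fiber X ω := by
  ext; simp_all

lemma fiber_subset_fiber_comp (Y : Ω → β) (ψ : β → γ) (ω : Ω) :
    fiber Y ω ⊆ fiber (fun ω => ψ (Y ω)) ω := fun ω' h => by simp_all

lemma fiber_inter_eq_filter (X : Ω → α) (s : Finset Ω) (ω : Ω) :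
    fiber X ω ∩ s = {j ∈ s | X j = X ω} := by
  ext; simp [and_comm]

lemma sum_logb_nonpos {s : Finset ι} {f : ι → ℝ} (hf : ∀ i ∈ s, 0 < f i)
    (hs : ∑ i ∈ s, f i ≤ #s) : ∑ i ∈ s, logb 2 (f i) ≤ 0 := by
  have hlog : ∑ i ∈ s, log (f i) ≤ 0 := calc
    ∑ i ∈ s, log (f i) ≤ ∑ i ∈ s, (f i - 1) :=
      sum_le_sum fun i hi => log_le_sub_one_of_pos (hf i hi)
    _ = ∑ i ∈ s, f i - #s := by simp [sum_sub_distrib]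
    _ ≤ 0 := by linarith
  simp only [logb, ← sum_div]
  exact div_nonpos_of_nonpos_of_nonneg hlog (log_nonneg one_le_two)

lemma sum_div_card_fiber (s : Finset ι) (f : ι → α) (g : α → ℝ) :
    ∑ i ∈ s, g (f i) / #{j ∈ s | f j = f i} = ∑ a ∈ s.image f, g a := by
  rw [sum_comp (fun a => g a / #{j ∈ s | f j = a}) f]
  refine sum_congr rfl fun a ha => ?_
  obtain ⟨i, hi, rfl⟩ := mem_image.1 ha
  have : 0 < #{j ∈ s | f j = f i} := card_pos.2 ⟨i, by simp [hi]⟩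
  rw [nsmul_eq_mul]
  field_simp

lemma sum_card_filter_div_card_filter_le (s t : Finset ι) (f : ι → α) :
    ∑ i ∈ s, (#{j ∈ t | f j = f i} : ℝ) / #{j ∈ s | f j = f i} ≤ #t := by
  rw [sum_div_card_fiber s f fun a => (#{j ∈ t | f j = a} : ℝ)]
  exact_mod_cast (sum_card_fiberwise_eq_card_filter t (s.image f) f).trans_le (card_filter_le _ _)

lemma entropy_eq_sum (X : Ω → α) :
    entropy X = (∑ ω, logb 2 (Fintype.card Ω / #(fiber X ω))) / Fintype.card Ω := by
  unfold entropy unifPr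
  congr 1
  refine sum_congr rfl fun ω _ => ?_
  rw [← logb_inv, inv_div, card_fiber_eq_natCard]
  rfl

lemma entropy_congr {X : Ω → α} {Y : Ω → β} (h : ∀ ω ω', X ω = X ω' ↔ Y ω = Y ω') :
    entropy X = entropy Y := by
  simp only [entropy, h]

theorem entropy_of_injective {X : Ω → α} (hX : Function.Injective X) :
    entropy X = logb 2 (Fintype.card Ω) := by
  have hfiber : ∀ ω, fiber X ω = {ω} := fun ω => by ext; simp [hX.eq_iff]
  simp only [entropy_eq_sum, hfiber, card_singleton, Nat.cast_one, div_one, sum_const,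
    card_univ, nsmul_eq_mul]
  rcases eq_or_ne (Fintype.card Ω : ℝ) 0 with h | h
  · simp [h]
  · field_simp

theorem entropy_le_logb_div {X : Ω → α} {k : ℕ} (hk : 0 < k) (h : ∀ ω, k ≤ #(fiber X ω)) :
    entropy X ≤ logb 2 (Fintype.card Ω / k) := by
  rcases isEmpty_or_nonempty Ω with hΩ | hΩ
  · simp [entropy]
  have hN : (0 : ℝ) < Fintype.card Ω := by exact_mod_cast Fintype.card_pos
  rw [entropy_eq_sum, div_le_iff₀ hN]
  calc ∑ ω, logb 2 (Fintype.card Ω / #(fiber X ω))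
      ≤ ∑ _ω : Ω, logb 2 (Fintype.card Ω / k) := by
        refine sum_le_sum fun ω _ => ?_
        have := card_fiber_pos X ω
        refine logb_le_logb_of_le one_lt_two (by positivity) ?_
        exact div_le_div_of_nonneg_left hN.le (by exact_mod_cast hk) (by exact_mod_cast h ω)
    _ = logb 2 (Fintype.card Ω / k) * Fintype.card Ω := by simp [mul_comm]

theorem entropy_le_logb_card [Fintype α] (X : Ω → α) :
    entropy X ≤ logb 2 (Fintype.card α) := by
  rcases isEmpty_or_nonempty Ω with hΩ | hΩ
  · simp only [entropy, univ_eq_empty, sum_empty, zero_div, logb]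
    positivity
  have hN : (0 : ℝ) < Fintype.card Ω := by exact_mod_cast Fintype.card_pos
  have hK : (0 : ℝ) < Fintype.card α := by exact_mod_cast Fintype.card_pos_iff.2 ⟨X hΩ.some⟩
  have hgibbs : ∑ ω, logb 2 (Fintype.card Ω / (Fintype.card α * #(fiber X ω))) ≤ 0 := by
    refine sum_logb_nonpos (fun ω _ => by have := card_fiber_pos X ω; positivity) ?_
    calc ∑ ω, (Fintype.card Ω : ℝ) / (Fintype.card α * #(fiber X ω))
        = Fintype.card Ω / Fintype.card α * ∑ ω, (1 : ℝ) / #(fiber X ω) := by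
          rw [mul_sum]; refine sum_congr rfl fun ω _ => ?_; field_simp
      _ = Fintype.card Ω / Fintype.card α * #(univ.image X) := by
          congr 1
          simpa [fiber] using sum_div_card_fiber univ X fun _ => (1 : ℝ)
      _ ≤ Fintype.card Ω / Fintype.card α * Fintype.card α := by
          gcongr; exact_mod_cast card_le_univ _
      _ = #(univ : Finset Ω) := by rw [card_univ]; field_simp
  have hsplit : ∑ ω, logb 2 (Fintype.card Ω / (Fintype.card α * #(fiber X ω))) =
      ∑ ω, logb 2 (Fintype.card Ω / #(fiber X ω)) - Fintype.card Ω * logb 2 (Fintype.card α) := by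
    have hterm : ∀ ω, logb 2 (Fintype.card Ω / (Fintype.card α * #(fiber X ω))) =
        logb 2 (Fintype.card Ω / #(fiber X ω)) - logb 2 (Fintype.card α) := fun ω => by
      have := card_fiber_pos X ω
      rw [logb_div hN.ne' (by positivity), logb_div hN.ne' (by positivity),
        logb_mul hK.ne' (by positivity)]
      ring
    simp only [hterm, sum_sub_distrib, sum_const, card_univ, nsmul_eq_mul]
  rw [entropy_eq_sum, div_le_iff₀ hN]
  linarith

lemma condEntropy_eq_sum (X : Ω → α) (Y : Ω → β) :
    condEntropy X Y =
      (∑ ω, logb 2 (#(fiber Y ω) / #(fiber X ω ∩ fiber Y ω))) / Fintype.card Ω := by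
  rw [condEntropy, entropy_eq_sum, entropy_eq_sum, ← sub_div, ← sum_sub_distrib]
  congr 1
  refine sum_congr rfl fun ω _ => ?_
  have hN : 0 < Fintype.card Ω := Fintype.card_pos_iff.2 ⟨ω⟩
  have ha := card_fiber_inter_pos X Y ω
  have hb := card_fiber_pos Y ω
  rw [fiber_pair, logb_div, logb_div, logb_div] <;> first | positivity | ring

lemma sum_card_fiber_ratio_le (X : Ω → α) (Y : Ω → β) (ψ : β → γ) :
    ∑ ω, ((#(fiber Y ω) : ℝ) / #(fiber X ω ∩ fiber Y ω)) /
      (#(fiber (fun ω => ψ (Y ω)) ω) / #(fiber X ω ∩ fiber (fun ω => ψ (Y ω)) ω)) ≤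
      Fintype.card Ω := by
  set Z := fun ω => ψ (Y ω)
  set r : Ω → ℝ := fun ω => (#(fiber X ω ∩ fiber Z ω) : ℝ) / #(fiber X ω ∩ fiber Y ω) /
    #(fiber Z ω)
  have hfiber : ∀ ω₁, ∑ ω ∈ fiber Y ω₁, r ω ≤ 1 := fun ω₁ => by
    have hd : (0 : ℝ) < #(fiber Z ω₁) := by exact_mod_cast card_fiber_pos Z ω₁
    calc ∑ ω ∈ fiber Y ω₁, r ω
        = (∑ ω ∈ fiber Y ω₁, (#{j ∈ fiber Z ω₁ | X j = X ω} : ℝ) /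
            #{j ∈ fiber Y ω₁ | X j = X ω}) / #(fiber Z ω₁) := by
          rw [sum_div]
          refine sum_congr rfl fun ω hω => ?_
          rw [← fiber_inter_eq_filter, ← fiber_inter_eq_filter, ← fiber_eq_of_mem hω,
            ← fiber_eq_of_mem (fiber_subset_fiber_comp Y ψ ω₁ hω)]
      _ ≤ 1 := (div_le_one hd).2 (sum_card_filter_div_card_filter_le _ _ X)
  calc ∑ ω, ((#(fiber Y ω) : ℝ) / #(fiber X ω ∩ fiber Y ω)) /
        (#(fiber Z ω) / #(fiber X ω ∩ fiber Z ω))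
      = ∑ ω, ∑ _ω₁ ∈ fiber Y ω, r ω := by
        refine sum_congr rfl fun ω _ => ?_
        have := card_fiber_pos Z ω
        have := card_fiber_inter_pos X Z ω
        rw [sum_const, nsmul_eq_mul]
        simp only [r]
        field_simp
    _ = ∑ ω₁, ∑ ω ∈ fiber Y ω₁, r ω :=
        sum_comm' fun ω ω₁ => by simp only [mem_fiber, mem_univ, true_and, and_true, eq_comm]
    _ ≤ ∑ _ω₁ : Ω, (1 : ℝ) := sum_le_sum fun ω₁ _ => hfiber ω₁
    _ = Fintype.card Ω := by simp

theorem condEntropy_le_condEntropy_comp (X : Ω → α) (Y : Ω → β) (ψ : β → γ) :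
    condEntropy X Y ≤ condEntropy X (fun ω => ψ (Y ω)) := by
  rw [condEntropy_eq_sum, condEntropy_eq_sum]
  refine div_le_div_of_nonneg_right ?_ (Nat.cast_nonneg _)
  rw [← sub_nonpos, ← sum_sub_distrib]
  set Z := fun ω => ψ (Y ω)
  have hY : ∀ ω, (0 : ℝ) < #(fiber Y ω) / #(fiber X ω ∩ fiber Y ω) := fun ω => by
    have := card_fiber_pos Y ω; have := card_fiber_inter_pos X Y ω; positivity
  have hZ : ∀ ω, (0 : ℝ) < #(fiber Z ω) / #(fiber X ω ∩ fiber Z ω) := fun ω => by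
    have := card_fiber_pos Z ω; have := card_fiber_inter_pos X Z ω; positivity
  rw [sum_congr rfl fun ω _ => (logb_div (hY ω).ne' (hZ ω).ne').symm]
  exact sum_logb_nonpos (fun ω _ => div_pos (hY ω) (hZ ω))
    (by simpa using sum_card_fiber_ratio_le X Y ψ)

theorem condEntropy_le_entropy (X : Ω → α) (Y : Ω → β) : condEntropy X Y ≤ entropy X := by
  refine (condEntropy_le_condEntropy_comp X Y fun _ => ()).trans_eq ?_
  have hfiber : ∀ ω, fiber (fun _ : Ω => ()) ω = univ := fun ω => by ext; simp
  rw [condEntropy_eq_sum, entropy_eq_sum]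
  simp only [hfiber, inter_univ, card_univ]

end UniformEntropy

section Realizations

variable {n v u : ℕ}

lemma card_pi_subtype {ι : Type*} [Fintype ι] {κ : ι → Type*} (p : ∀ i, κ i → Prop) :
    Nat.card {f : ∀ i, κ i // ∀ i, p i (f i)} = ∏ i, Nat.card {x // p i x} := by
  rw [Nat.card_congr Equiv.subtypePiEquivPi, Nat.card_pi]

lemma card_pi_ne {ι α : Type*} [Fintype ι] [Fintype α] (g : ι → α) :
    Nat.card {f : ι → α // ∀ i, f i ≠ g i} = (Fintype.card α - 1) ^ Fintype.card ι := by
  classical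
  rw [card_pi_subtype fun i x => x ≠ g i]
  simp [Nat.card_eq_fintype_card, Fintype.card_subtype_compl]

lemma card_firstBit_eq (hv : 0 < v) (b : Bool) :
    Nat.card {r : Fin v → Bool // firstBit r = b} = 2 ^ (v - 1) := by
  obtain ⟨k, rfl⟩ : ∃ k, v = k + 1 := ⟨v - 1, by omega⟩
  have hfirst : ∀ r : Fin (k + 1) → Bool, firstBit r = r 0 := fun r => by simp [firstBit]
  let e : (Fin k → Bool) ≃ {r : Fin (k + 1) → Bool // firstBit r = b} :=
    { toFun := fun t => ⟨Fin.cons b t, by simp [hfirst]⟩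
      invFun := fun r => Fin.tail r.1
      left_inv := fun t => Fin.tail_cons _ _
      right_inv := fun ⟨r, hr⟩ => Subtype.ext <| by
        change Fin.cons b (Fin.tail r) = r
        rw [← hr, hfirst, Fin.cons_self_tail] }
  rw [← Nat.card_congr e]
  simp

lemma card_validAR (hv : 0 < v) (A : Fin (M n v) → Fin (W n v u)) :
    Nat.card {RA // ValidAR n v u A RA} = (2 ^ (v - 1)) ^ M n v := by
  unfold ValidAR
  rw [card_pi_subtype fun _ r => firstBit r = false, prod_const, card_firstBit_eq hv, card_univ,
    Fintype.card_fin]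

lemma card_validRB (hv : 0 < v) (P : Finset (Fin (M n v))) :
    Nat.card {RB // ValidRB n v P RB} = (2 ^ (v - 1)) ^ #P := by
  have hiff : ∀ RB : Fin (M n v) → Fin v → Bool, ValidRB n v P RB ↔
      ∀ j, (j ∈ P → firstBit (RB j) = true) ∧ (j ∉ P → RB j = fun _ => false) := fun RB =>
    ⟨fun h j => ⟨h.1 j, h.2 j⟩, fun h => ⟨fun j => (h j).1, fun j => (h j).2⟩⟩
  have hpt : ∀ j, Nat.card {r : Fin v → Bool //
      (j ∈ P → firstBit r = true) ∧ (j ∉ P → r = fun _ => false)} =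
      if j ∈ P then 2 ^ (v - 1) else 1 := fun j => by
    by_cases hj : j ∈ P
    · simpa [hj] using card_firstBit_eq hv true
    · simp [hj]
  rw [Nat.card_congr (Equiv.subtypeEquivRight hiff),
    card_pi_subtype fun j r => (j ∈ P → firstBit r = true) ∧ (j ∉ P → r = fun _ => false),
    Fintype.prod_congr _ _ hpt, Fintype.prod_ite_mem, prod_const]

lemma M_add_div : M n v + n / v = n :=
  Nat.sub_add_cancel (Nat.div_le_self n v)

lemma pow_le_card_fiber_Brv (hv : 0 < v) (ω : IncOmega n v u) :
    (W n v u - 1) ^ M n v * (2 ^ (v - 1)) ^ n ≤ #(fiber (Brv n v u) ω) := by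
  obtain ⟨⟨⟨A, RA⟩, P, B, RB⟩, hω⟩ := ω
  have ⟨_, ⟨hP, _, hB0⟩, _⟩ := hω
  let embed : {A' : Fin (M n v) → Fin (W n v u) // ∀ j, A' j ≠ B j} ×
      {RA' // ValidAR n v u A RA'} × {RB' // ValidRB n v P RB'} →
      {ω' : IncOmega n v u // Brv n v u ω' = (P, B)} := fun t =>
    ⟨⟨((t.1.1, t.2.1.1), (P, B, t.2.2.1)),
      t.2.1.2, ⟨hP, fun j _ => (t.1.2 j).symm, hB0⟩, t.2.2.2⟩, rfl⟩
  have hembed : Function.Injective embed := by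
    rintro ⟨⟨A₁, _⟩, ⟨R₁, _⟩, ⟨S₁, _⟩⟩ ⟨⟨A₂, _⟩, ⟨R₂, _⟩, ⟨S₂, _⟩⟩ h
    simp_all [embed, Subtype.ext_iff]
  calc (W n v u - 1) ^ M n v * (2 ^ (v - 1)) ^ n
      = Nat.card ({A' : Fin (M n v) → Fin (W n v u) // ∀ j, A' j ≠ B j} ×
          {RA' // ValidAR n v u A RA'} × {RB' // ValidRB n v P RB'}) := by
        rw [Nat.card_prod, Nat.card_prod, card_pi_ne, Fintype.card_fin, Fintype.card_fin,
          card_validAR hv, card_validRB hv, hP, ← pow_add, M_add_div]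
    _ ≤ Nat.card {ω' : IncOmega n v u // Brv n v u ω' = (P, B)} :=
        Nat.card_le_card_of_injective embed hembed
    _ = #(fiber (Brv n v u) ⟨((A, RA), P, B, RB), hω⟩) :=
        (card_fiber_eq_natCard (Brv n v u) ⟨((A, RA), P, B, RB), hω⟩).symm

lemma entropy_A_le : entropy (fun ω : IncOmega n v u => ω.1.1.1) ≤ M n v * logb 2 (W n v u) := by
  simpa [logb_pow] using entropy_le_logb_card (fun ω : IncOmega n v u => ω.1.1.1)

lemma Hyp.two_le_n (h : Hyp n v u) : 2 ≤ n := by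
  by_contra hn
  have : logb 2 n ≤ 0 :=
    logb_nonpos one_lt_two (Nat.cast_nonneg n) (by exact_mod_cast (by omega : n ≤ 1))
  have : (2 : ℝ) ≤ v := by exact_mod_cast h.1
  linarith [h.2.1]

lemma Hyp.div_le_M (h : Hyp n v u) : n / v ≤ M n v := by
  have := Nat.div_le_div_left (a := n) h.1 two_pos
  unfold M
  omega

lemma Hyp.two_le_W (h : Hyp n v u) : 2 ≤ W n v u := by
  have hn := h.two_le_n
  have hM : 0 < M n v := by
    have := h.div_le_M
    have := M_add_div (n := n) (v := v)
    omega
  calc 2 ≤ n ^ 2 := by nlinarith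
    _ = n ^ 3 / n := (Nat.div_eq_of_eq_mul_left (by omega) (by ring)).symm
    _ ≤ u / n := Nat.div_le_div_right h.2.2.2.2
    _ ≤ u / M n v := Nat.div_le_div_left (Nat.sub_le _ _) hM

lemma Hyp.nonempty (h : Hyp n v u) : Nonempty (IncOmega n v u) := by
  obtain ⟨P, -, hP⟩ := exists_subset_card_eq (s := (univ : Finset (Fin (M n v))))
    (by simpa using h.div_le_M)
  have hW := h.two_le_W
  have hv : 0 < v := by have := h.1; omega
  refine ⟨⟨((fun _ => ⟨0, by omega⟩, fun _ _ => false),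
    (P, fun j => if j ∈ P then ⟨1, by omega⟩ else ⟨0, by omega⟩, fun j _ => decide (j ∈ P))),
    fun j => ?_, ⟨hP, fun j hj => ?_, fun j hj => ?_⟩, fun j hj => ?_, fun j hj => ?_⟩⟩ <;>
    simp_all [firstBit, Fin.ext_iff]

lemma Hyp.entropy_Brv_le (h : Hyp n v u) :
    entropy (Brv n v u) + n * v - 2 * n ≤
      logb 2 (Fintype.card (IncOmega n v u)) - M n v * logb 2 (W n v u) := by
  have := h.nonempty
  have hv : 1 ≤ v := by have := h.1; omega
  have hW := h.two_le_W
  have hWR : (2 : ℝ) ≤ W n v u := by exact_mod_cast hW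
  have hN : (0 : ℝ) < Fintype.card (IncOmega n v u) := by exact_mod_cast Fintype.card_pos
  have hK : 0 < (W n v u - 1) ^ M n v * (2 ^ (v - 1)) ^ n := by
    have : 0 < W n v u - 1 := by omega
    positivity
  have hB := entropy_le_logb_div hK (pow_le_card_fiber_Brv hv)
  have hlogK : logb 2 (((W n v u - 1) ^ M n v * (2 ^ (v - 1)) ^ n : ℕ) : ℝ) =
      M n v * logb 2 (W n v u - 1) + n * (v - 1) := by
    have : (0 : ℝ) < W n v u - 1 := by linarith
    push_cast [Nat.cast_sub (by omega : 1 ≤ W n v u)]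
    rw [logb_mul (by positivity) (by positivity), logb_pow, logb_pow, logb_pow,
      logb_self_eq_one one_lt_two, Nat.cast_sub hv]
    ring
  have hlogW : logb 2 (W n v u) ≤ logb 2 (W n v u - 1) + 1 := calc
    logb 2 (W n v u) ≤ logb 2 (2 * (W n v u - 1)) :=
      logb_le_logb_of_le one_lt_two (by linarith) (by linarith)
    _ = logb 2 (W n v u - 1) + 1 := by
      rw [logb_mul two_ne_zero (by linarith), logb_self_eq_one one_lt_two]
      ring
  have hM : (M n v : ℝ) ≤ n := by exact_mod_cast Nat.sub_le n (n / v)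
  rw [logb_div hN.ne' (by exact_mod_cast hK.ne'), hlogK] at hB
  nlinarith [mul_le_mul_of_nonneg_left hlogW (Nat.cast_nonneg (M n v))]

theorem logb_card_sub_entropy_le {F : FBuilder n v u} {G : GBuilder n v u} {Q : QueryFn v}
    (hQ : Correct n v u F G Q) :
    logb 2 (Fintype.card (IncOmega n v u)) - entropy (fun ω : IncOmega n v u => ω.1.1.1) ≤
      entropy (Grv n v u F G) +
        condEntropy (BRrv n v u) (fun ω => (Frv n v u F ω, Grv n v u F G ω)) := by
  have hcomp : condEntropy (BRrv n v u) (fun ω => (ω.1.1, Grv n v u F G ω)) ≤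
      condEntropy (BRrv n v u) (fun ω => (Frv n v u F ω, Grv n v u F G ω)) :=
    condEntropy_le_condEntropy_comp (BRrv n v u) (fun ω => (ω.1.1, Grv n v u F G ω))
      fun p => (F p.1.1 p.1.2, p.2)
  have hall : entropy (fun ω => (BRrv n v u ω, (ω.1.1, Grv n v u F G ω))) =
      logb 2 (Fintype.card (IncOmega n v u)) :=
    entropy_of_injective fun ω ω' h =>
      Subtype.ext (Prod.ext (congrArg (·.2.1) h) (congrArg Prod.fst h))
  have hRA : entropy (fun ω : IncOmega n v u => (ω.1.1, Grv n v u F G ω)) =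
      entropy (fun ω : IncOmega n v u => (ω.1.1.1, Grv n v u F G ω)) := by
    refine entropy_congr fun ω ω' => ⟨fun h => congrArg (fun p => (p.1.1, p.2)) h, fun h => ?_⟩
    simp only [Prod.mk.injEq] at h ⊢
    refine ⟨Prod.ext h.1 (funext fun i => ?_), h.2⟩
    rw [← (hQ ω).2.1 i, ← (hQ ω').2.1 i, h.1, h.2]
  have hsub := condEntropy_le_entropy (fun ω : IncOmega n v u => ω.1.1.1) (Grv n v u F G)
  rw [condEntropy] at hcomp hsub
  linarith

end Realizations

/-- **Claim 3.1.** There is an absolute constant `C > 0` such that for all parameters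
`n, v, u` satisfying the model hypotheses and every deterministic incremental retrieval
scheme `(F, G, Query)`, the random variables of the process satisfy
`H(G) + H((B, R_B) | (F, G)) ≥ H(B) + n·v − C·n`. -/
theorem protocol_entropy_bound :
    ∃ C : ℝ, 0 < C ∧ ∀ n v u : ℕ, Hyp n v u →
      ∀ (F : FBuilder n v u) (G : GBuilder n v u) (Q : QueryFn v),
        Correct n v u F G Q →
        entropy (Brv n v u) + (n : ℝ) * v - C * n ≤
          entropy (Grv n v u F G) +
            condEntropy (BRrv n v u) (fun ω => (Frv n v u F ω, Grv n v u F G ω)) := by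
  refine ⟨2, two_pos, fun n v u hyp F G Q hQ => ?_⟩
  linarith [hyp.entropy_Brv_le, entropy_A_le (n := n) (v := v) (u := u),
    logb_card_sub_entropy_le hQ]

end Retrieval
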